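/- Assume E‖X‖² < ∞ and that there is no nonzero v ∈ ℝ^p with E|v'X| = 0. Then the matrix H(θ, λ) = ∫ [e^{(θ−λ)'x}/(1+e^{(θ−λ)'x})²] · [(e^{λ'x} + e^{f(x)})/((1+e^{λ'x})(1+e^{f(x)}))] x x' dP(x) is finite, symmetric positive definite for every (θ, λ) ∈ ℝ^p × ℝ^p, and jointly continuous in (θ, λ); likewise the score covariance J(θ, λ) = Var_{P_λ}[(Y − σ((θ−λ)'X)) X] is finite and jointly continuous in (θ, λ). -/

import Mathlib

open MeasureTheory ProbabilityTheory Real Filter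
open scoped ENNReal NNReal RealInnerProductSpace Topology BoundedContinuousFunction

noncomputable section

/-- Shorthand for `ℝ^d` with the Euclidean inner product. -/
abbrev Evec (d : ℕ) := EuclideanSpace ℝ (Fin d)

/-- The logistic sigmoid `σ(t) = eᵗ / (1 + eᵗ)`. -/
def sigm (t : ℝ) : ℝ := Real.exp t / (1 + Real.exp t)

/-- The soft hinge function `h(η; π) = -π η + log (1 + e^η)`. -/
def softHinge (η pr : ℝ) : ℝ := -pr * η + Real.log (1 + Real.exp η)

variable {d : ℕ}

/-- The joint law of `(X, Y)` on `ℝ^d × ℝ` determined by the marginal law `ν` of `X`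
and the conditional probability `pf x = P(Y = 1 | X = x)`; `Y ∈ {0, 1}`. -/
def jointLaw (ν : Measure (Evec d)) (pf : Evec d → ℝ) : Measure (Evec d × ℝ) :=
  ν.bind fun x => ENNReal.ofReal (pf x) • Measure.dirac (x, (1 : ℝ)) +
    ENNReal.ofReal (1 - pf x) • Measure.dirac (x, (0 : ℝ))

/-- The logistic loss `ρ(θ; x, y) = -y θ'x + log (1 + exp (θ'x))` (intercept absorbed). -/
def logisticLoss (θ : Evec d) (xy : Evec d × ℝ) : ℝ :=
  -xy.2 * ⟪θ, xy.1⟫ + Real.log (1 + Real.exp ⟪θ, xy.1⟫)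

/-- The conditional log-odds `f(x) = logit p(x)`. -/
def flogit (pf : Evec d → ℝ) (x : Evec d) : ℝ := Real.log (pf x / (1 - pf x))

/-- Local case-control acceptance probability `a_λ(x, y) = |y - σ(λ'x)|`. -/
def accProb (lam : Evec d) (xy : Evec d × ℝ) : ℝ := |xy.2 - sigm ⟪lam, xy.1⟫|

/-- Marginal acceptance probability `ā(λ) = E[a_λ(X, Y)]`. -/
def aBar (μ : Measure (Evec d × ℝ)) (lam : Evec d) : ℝ := ∫ xy, accProb lam xy ∂μ

/-- Conditional acceptance probability `â_λ(x) = σ(λ'x)(1 - p(x)) + (1 - σ(λ'x)) p(x)`. -/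
def aHat (pf : Evec d → ℝ) (lam x : Evec d) : ℝ :=
  sigm ⟪lam, x⟫ * (1 - pf x) + (1 - sigm ⟪lam, x⟫) * pf x

/-- The tilted (biased subsampling) measure `dP_λ = a_λ dP / ā(λ)`. -/
def tiltedLaw (μ : Measure (Evec d × ℝ)) (lam : Evec d) : Measure (Evec d × ℝ) :=
  μ.withDensity fun xy => ENNReal.ofReal (accProb lam xy / aBar μ lam)

/-- Population risk under the tilted measure: `R_λ(θ) = E_{P_λ}[ρ(θ; X, Y)]`. -/
def Rpop (μ : Measure (Evec d × ℝ)) (lam θ : Evec d) : ℝ :=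
  ∫ xy, logisticLoss θ xy ∂(tiltedLaw μ lam)

/-- Recentred population risk `Q_λ(θ) = R_λ(θ - λ)`. -/
def Qpop (μ : Measure (Evec d × ℝ)) (lam θ : Evec d) : ℝ := Rpop μ lam (θ - lam)

/-- Nonseparability: no nonzero direction `v` separates the two classes. -/
def NonSep (μ : Measure (Evec d × ℝ)) : Prop :=
  ¬ ∃ v : Evec d, v ≠ 0 ∧ μ {xy | xy.2 = 0 ∧ 0 < ⟪v, xy.1⟫} = 0 ∧
    μ {xy | xy.2 = 1 ∧ ⟪v, xy.1⟫ < 0} = 0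

/-- Nondegeneracy: there is no nonzero `v` with `E|v'X| = 0`. -/
def NonDegen (μ : Measure (Evec d × ℝ)) : Prop :=
  ∀ v : Evec d, v ≠ 0 → ∫ xy, |⟪v, xy.1⟫| ∂μ ≠ 0

/-- The Hessian-type matrix `H(θ, λ)` (entrywise integrals). -/
def Hmat (ν : Measure (Evec d)) (pf : Evec d → ℝ) (θ lam : Evec d) :
    Matrix (Fin d) (Fin d) ℝ :=
  Matrix.of fun i j => ∫ x,
    Real.exp ⟪θ - lam, x⟫ / (1 + Real.exp ⟪θ - lam, x⟫) ^ 2 *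
      ((Real.exp ⟪lam, x⟫ + Real.exp (flogit pf x)) /
        ((1 + Real.exp ⟪lam, x⟫) * (1 + Real.exp (flogit pf x)))) * (x i * x j) ∂ν

/-- The logistic score vector `(y - σ((θ-λ)'x)) x`. -/
def scoreVec (θ lam : Evec d) (xy : Evec d × ℝ) : Evec d :=
  (xy.2 - sigm ⟪θ - lam, xy.1⟫) • xy.1

/-- The score covariance matrix `J(θ, λ) = Var_{P_λ}[(Y - σ((θ-λ)'X)) X]` (entrywise). -/
def Jmat (μ : Measure (Evec d × ℝ)) (θ lam : Evec d) : Matrix (Fin d) (Fin d) ℝ :=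
  Matrix.of fun i j => ∫ xy,
    (scoreVec θ lam xy i - (∫ xy', scoreVec θ lam xy' ∂(tiltedLaw μ lam)) i) *
      (scoreVec θ lam xy j - (∫ xy', scoreVec θ lam xy' ∂(tiltedLaw μ lam)) j)
    ∂(tiltedLaw μ lam)

/-- The population score `G(θ, λ) = ∫ (σ(f(x) - λ'x) - σ((θ-λ)'x)) â_λ(x) x dP(x)`. -/
def Gfun (ν : Measure (Evec d)) (pf : Evec d → ℝ) (θ lam : Evec d) : Evec d :=
  ∫ x, ((sigm (flogit pf x - ⟪lam, x⟫) - sigm ⟪θ - lam, x⟫) * aHat pf lam x) • x ∂ν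

/-- The full-sample Fisher information `∫ σ(θ₀'x)(1 - σ(θ₀'x)) x x' dP(x)`,
whose inverse is the asymptotic covariance `Σ_full` of the full-sample MLE. -/
def Mfull (ν : Measure (Evec d)) (θ0 : Evec d) : Matrix (Fin d) (Fin d) ℝ :=
  Matrix.of fun i j => ∫ x, sigm ⟪θ0, x⟫ * (1 - sigm ⟪θ0, x⟫) * (x i * x j) ∂ν

/-- Loewner (positive-semidefinite) order on symmetric matrices. -/
def loewnerLE (A B : Matrix (Fin d) (Fin d) ℝ) : Prop := (B - A).PosSemidef

/-! `H(θ, λ) = ∫ w x xᵀ dP(x)` for a weight `0 < w ≤ 1/4` that is continuous in `(θ, λ)`, so its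
entries are dominated by `‖x‖² / 4`: finiteness and continuity follow by dominated convergence, and
`vᵀ H v = ∫ w ⟪v, x⟫² dP` vanishes only if `⟪v, X⟫ = 0` almost surely, which nondegeneracy excludes.
For `J`, the acceptance probability satisfies `0 < a_λ ≤ 1` because `Y ∈ {0, 1}`, so `ā` is positive
and continuous, `dP_λ ≤ dP / ā(λ)`, and the score is bounded by `‖X‖`; the centred score products are
then dominated by `2‖X‖² + 2M²`, with `M` a local bound on the norm of the tilted mean score, and
dominated convergence applies again. -/

lemma abs_apply_mul_apply_le_norm_sq (x : Evec d) (i j : Fin d) : |x i * x j| ≤ ‖x‖ ^ 2 := by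
  rw [abs_mul, sq]
  exact mul_le_mul (PiLp.norm_apply_le x i) (PiLp.norm_apply_le x j) (abs_nonneg _) (norm_nonneg _)

def weightedGram (ν : Measure (Evec d)) (w : Evec d → ℝ) : Matrix (Fin d) (Fin d) ℝ :=
  Matrix.of fun i j => ∫ x, w x * (x i * x j) ∂ν

section WeightedGram

open Matrix

variable {ν : Measure (Evec d)} {w : Evec d → ℝ} {C : ℝ}

lemma norm_mul_apply_mul_apply_le (hw : ∀ x, |w x| ≤ C) (x : Evec d) (i j : Fin d) :
    ‖w x * (x i * x j)‖ ≤ C * ‖x‖ ^ 2 := by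
  rw [Real.norm_eq_abs, abs_mul]
  exact mul_le_mul (hw x) (abs_apply_mul_apply_le_norm_sq x i j) (abs_nonneg _)
    ((abs_nonneg _).trans (hw x))

lemma integrable_mul_apply_mul_apply (hwm : AEStronglyMeasurable w ν) (hw : ∀ x, |w x| ≤ C)
    (hX2 : Integrable (fun x : Evec d => ‖x‖ ^ 2) ν) (i j : Fin d) :
    Integrable (fun x => w x * (x i * x j)) ν := by
  refine (hX2.const_mul C).mono' (hwm.mul ?_) (ae_of_all _ (norm_mul_apply_mul_apply_le hw · i j))
  fun_prop

lemma dotProduct_weightedGram_mulVec (hint : ∀ i j, Integrable (fun x => w x * (x i * x j)) ν)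
    (v : Fin d → ℝ) :
    star v ⬝ᵥ (weightedGram ν w *ᵥ v) = ∫ x, w x * ⟪WithLp.toLp 2 v, x⟫ ^ 2 ∂ν := by
  have hsq : ∀ x : Evec d, w x * ⟪WithLp.toLp 2 v, x⟫ ^ 2 =
      ∑ i, ∑ j, w x * (x i * x j) * (v i * v j) := by
    intro x
    simp only [PiLp.inner_apply, RCLike.inner_apply, conj_trivial]
    rw [sq, Finset.sum_mul_sum, Finset.mul_sum]
    exact Finset.sum_congr rfl fun i _ => by
      rw [Finset.mul_sum]
      exact Finset.sum_congr rfl fun j _ => by ring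
  simp_rw [hsq]
  rw [integral_finsetSum _ fun i _ => integrable_finsetSum _ fun j _ => (hint i j).mul_const _]
  simp only [dotProduct, Matrix.mulVec, weightedGram, Matrix.of_apply, Pi.star_apply,
    star_trivial, Finset.mul_sum]
  refine Finset.sum_congr rfl fun i _ => ?_
  rw [integral_finsetSum _ fun j _ => (hint i j).mul_const _]
  refine Finset.sum_congr rfl fun j _ => ?_
  rw [integral_mul_const]
  ring

lemma weightedGram_posDef (hwm : AEStronglyMeasurable w ν) (hw : ∀ x, |w x| ≤ C)
    (hw_pos : ∀ x, 0 < w x) (hX2 : Integrable (fun x : Evec d => ‖x‖ ^ 2) ν)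
    (hnd : ∀ v : Evec d, v ≠ 0 → ∫ x, |⟪v, x⟫| ∂ν ≠ 0) :
    (weightedGram ν w).PosDef := by
  refine .of_dotProduct_mulVec_pos ?_ fun v hv => ?_
  · ext i j
    simp only [Matrix.conjTranspose_apply, weightedGram, Matrix.of_apply, star_trivial, mul_comm]
  set u : Evec d := WithLp.toLp 2 v
  have hu : u ≠ 0 := fun h => hv (by simpa [u] using congrArg WithLp.ofLp h)
  have hnn : 0 ≤ fun x => w x * ⟪u, x⟫ ^ 2 := fun x => mul_nonneg (hw_pos x).le (sq_nonneg _)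
  have hint : Integrable (fun x => w x * ⟪u, x⟫ ^ 2) ν := by
    refine (hX2.const_mul (C * ‖u‖ ^ 2)).mono' (hwm.mul (by fun_prop)) (ae_of_all _ fun x => ?_)
    rw [Real.norm_eq_abs, abs_mul, abs_sq, mul_assoc, ← mul_pow]
    have hcs := pow_le_pow_left₀ (abs_nonneg _) (abs_real_inner_le_norm u x) 2
    rw [sq_abs] at hcs
    exact mul_le_mul (hw x) hcs (sq_nonneg _) ((abs_nonneg _).trans (hw x))
  rw [dotProduct_weightedGram_mulVec (integrable_mul_apply_mul_apply hwm hw hX2)]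
  refine (integral_nonneg hnn).lt_of_ne fun h0 => hnd u hu ?_
  -- `w > 0`, so `∫ w ⟪u, x⟫² = 0` forces `⟪u, x⟫ = 0` almost everywhere.
  refine integral_eq_zero_of_ae ?_
  filter_upwards [(integral_eq_zero_iff_of_nonneg hnn hint).mp h0.symm] with x hx
  simpa [(hw_pos x).ne'] using hx

lemma continuous_weightedGram {T : Type*} [TopologicalSpace T] [FirstCountableTopology T]
    {w : T → Evec d → ℝ} (hwm : ∀ t, AEStronglyMeasurable (w t) ν) (hw : ∀ t x, |w t x| ≤ C)
    (hwc : ∀ x, Continuous fun t => w t x) (hX2 : Integrable (fun x : Evec d => ‖x‖ ^ 2) ν) :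
    Continuous fun t => weightedGram ν (w t) := by
  refine continuous_matrix fun i j => continuous_of_dominated
    (fun t => (integrable_mul_apply_mul_apply (hwm t) (hw t) hX2 i j).aestronglyMeasurable)
    (fun t => ae_of_all _ fun x => norm_mul_apply_mul_apply_le (hw t) x i j)
    (hX2.const_mul C) (ae_of_all _ fun x => (hwc x).mul continuous_const)

end WeightedGram

def hWeight (pf : Evec d → ℝ) (θ lam x : Evec d) : ℝ :=
  Real.exp ⟪θ - lam, x⟫ / (1 + Real.exp ⟪θ - lam, x⟫) ^ 2 *
    ((Real.exp ⟪lam, x⟫ + Real.exp (flogit pf x)) /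
      ((1 + Real.exp ⟪lam, x⟫) * (1 + Real.exp (flogit pf x))))

lemma Hmat_eq_weightedGram (ν : Measure (Evec d)) (pf : Evec d → ℝ) (θ lam : Evec d) :
    Hmat ν pf θ lam = weightedGram ν (hWeight pf θ lam) := rfl

section HWeight

variable {pf : Evec d → ℝ}

lemma hWeight_pos (θ lam x : Evec d) : 0 < hWeight pf θ lam x := by
  unfold hWeight; positivity

lemma abs_hWeight_le (θ lam x : Evec d) : |hWeight pf θ lam x| ≤ 1 / 4 := by
  rw [abs_of_pos (hWeight_pos θ lam x)]
  have ha := exp_pos ⟪θ - lam, x⟫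
  have hb := exp_pos ⟪lam, x⟫
  have hc := exp_pos (flogit pf x)
  have h₁ : Real.exp ⟪θ - lam, x⟫ / (1 + Real.exp ⟪θ - lam, x⟫) ^ 2 ≤ 1 / 4 := by
    rw [div_le_iff₀ (by positivity)]; nlinarith [sq_nonneg (1 - Real.exp ⟪θ - lam, x⟫)]
  have h₂ : (Real.exp ⟪lam, x⟫ + Real.exp (flogit pf x)) /
      ((1 + Real.exp ⟪lam, x⟫) * (1 + Real.exp (flogit pf x))) ≤ 1 := by
    rw [div_le_one (by positivity)]; nlinarith
  exact (mul_le_mul h₁ h₂ (by positivity) (by norm_num)).trans_eq (mul_one _)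

lemma measurable_hWeight (hpf : Measurable pf) (θ lam : Evec d) :
    Measurable (hWeight pf θ lam) := by
  have : Measurable (flogit pf) := by unfold flogit; fun_prop
  unfold hWeight; fun_prop

lemma continuous_hWeight (x : Evec d) :
    Continuous fun tl : Evec d × Evec d => hWeight pf tl.1 tl.2 x := by
  unfold hWeight; fun_prop (disch := intro; positivity)

end HWeight

section JointLaw

variable {ν : Measure (Evec d)} {pf : Evec d → ℝ}

lemma measurable_jointLaw_kernel (hpf : Measurable pf) :
    Measurable fun x : Evec d => ENNReal.ofReal (pf x) • Measure.dirac (x, (1 : ℝ)) +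
      ENNReal.ofReal (1 - pf x) • Measure.dirac (x, (0 : ℝ)) := by
  refine Measure.measurable_of_measurable_coe _ fun s hs => ?_
  simp only [Measure.coe_add, Pi.add_apply, Measure.smul_apply, smul_eq_mul,
    Measure.dirac_apply' _ hs]
  have hind : Measurable (s.indicator (1 : Evec d × ℝ → ℝ≥0∞)) := measurable_one.indicator hs
  fun_prop

lemma jointLaw_apply (hpf : Measurable pf) {s : Set (Evec d × ℝ)} (hs : MeasurableSet s) :
    jointLaw ν pf s = ∫⁻ x, ENNReal.ofReal (pf x) * s.indicator 1 (x, 1) +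
      ENNReal.ofReal (1 - pf x) * s.indicator 1 (x, 0) ∂ν := by
  rw [jointLaw, Measure.bind_apply hs (measurable_jointLaw_kernel hpf).aemeasurable]
  simp only [Measure.coe_add, Pi.add_apply, Measure.smul_apply, smul_eq_mul,
    Measure.dirac_apply' _ hs]

lemma map_fst_jointLaw (hpf : Measurable pf) (hp : ∀ x, pf x ∈ Set.Icc 0 1) :
    (jointLaw ν pf).map Prod.fst = ν := by
  ext s hs
  rw [Measure.map_apply measurable_fst hs, jointLaw_apply hpf (measurable_fst hs),
    ← lintegral_indicator_one hs]
  refine lintegral_congr fun x => ?_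
  have hx : ∀ y : ℝ, (Prod.fst ⁻¹' s).indicator (1 : Evec d × ℝ → ℝ≥0∞) (x, y) =
      s.indicator 1 x := fun y => rfl
  rw [hx, hx, ← add_mul, ← ENNReal.ofReal_add (hp x).1 (sub_nonneg.2 (hp x).2),
    add_sub_cancel, ENNReal.ofReal_one, one_mul]

lemma isProbabilityMeasure_jointLaw [IsProbabilityMeasure ν] (hpf : Measurable pf)
    (hp : ∀ x, pf x ∈ Set.Icc 0 1) : IsProbabilityMeasure (jointLaw ν pf) := by
  constructor
  rw [← Set.preimage_univ (f := Prod.fst), ← Measure.map_apply measurable_fst .univ,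
    map_fst_jointLaw hpf hp, measure_univ]

lemma ae_snd_eq_zero_or_one_jointLaw (hpf : Measurable pf) :
    ∀ᵐ xy ∂jointLaw ν pf, xy.2 = 0 ∨ xy.2 = 1 := by
  have hs : MeasurableSet {xy : Evec d × ℝ | ¬(xy.2 = 0 ∨ xy.2 = 1)} := by measurability
  rw [ae_iff, jointLaw_apply hpf hs]
  simp

lemma integrable_comp_fst_jointLaw (hpf : Measurable pf) (hp : ∀ x, pf x ∈ Set.Icc 0 1)
    {g : Evec d → ℝ} (hg : Integrable g ν) : Integrable (fun xy => g xy.1) (jointLaw ν pf) := by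
  rw [← map_fst_jointLaw (ν := ν) hpf hp] at hg
  exact hg.comp_measurable measurable_fst

end JointLaw

lemma sigm_eq_sigmoid : sigm = Real.sigmoid := by
  funext t
  rw [sigm, Real.sigmoid_def, Real.exp_neg]
  field_simp
  ring

@[fun_prop]
lemma continuous_sigm : Continuous sigm := sigm_eq_sigmoid ▸ continuous_sigmoid

section AcceptanceAndScore

variable {T : Type*} [TopologicalSpace T]

@[fun_prop]
lemma Continuous.accProb {f : T → Evec d} {g : T → Evec d × ℝ} (hf : Continuous f)
    (hg : Continuous g) : Continuous fun t => accProb (f t) (g t) := by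
  unfold _root_.accProb; fun_prop

lemma accProb_nonneg (lam : Evec d) (xy : Evec d × ℝ) : 0 ≤ accProb lam xy := abs_nonneg _

lemma accProb_le_one (lam : Evec d) {xy : Evec d × ℝ} (h : xy.2 = 0 ∨ xy.2 = 1) :
    accProb lam xy ≤ 1 := by
  have h₀ := Real.sigmoid_pos ⟪lam, xy.1⟫
  have h₁ := Real.sigmoid_lt_one ⟪lam, xy.1⟫
  rcases h with h | h <;> rw [accProb, h, sigm_eq_sigmoid, abs_le] <;> constructor <;> linarith

lemma accProb_pos (lam : Evec d) {xy : Evec d × ℝ} (h : xy.2 = 0 ∨ xy.2 = 1) :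
    0 < accProb lam xy := by
  have h₀ := Real.sigmoid_pos ⟪lam, xy.1⟫
  have h₁ := Real.sigmoid_lt_one ⟪lam, xy.1⟫
  rcases h with h | h <;> rw [accProb, h, sigm_eq_sigmoid, abs_pos] <;> linarith

@[fun_prop]
lemma Continuous.scoreVec {f g : T → Evec d} {h : T → Evec d × ℝ} (hf : Continuous f)
    (hg : Continuous g) (hh : Continuous h) :
    Continuous fun t => scoreVec (f t) (g t) (h t) := by
  unfold _root_.scoreVec; fun_prop

lemma norm_scoreVec_le (θ lam : Evec d) {xy : Evec d × ℝ} (h : xy.2 = 0 ∨ xy.2 = 1) :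
    ‖scoreVec θ lam xy‖ ≤ ‖xy.1‖ := by
  rw [scoreVec, norm_smul, Real.norm_eq_abs]
  exact mul_le_of_le_one_left (norm_nonneg _) (accProb_le_one (θ - lam) h)

end AcceptanceAndScore

section Tilted

variable {μ : Measure (Evec d × ℝ)}

lemma aBar_nonneg (μ : Measure (Evec d × ℝ)) (lam : Evec d) : 0 ≤ aBar μ lam :=
  integral_nonneg (accProb_nonneg lam)

lemma integral_tiltedLaw {E : Type*} [NormedAddCommGroup E] [NormedSpace ℝ E] (lam : Evec d)
    (g : Evec d × ℝ → E) :
    ∫ xy, g xy ∂tiltedLaw μ lam = (aBar μ lam)⁻¹ • ∫ xy, accProb lam xy • g xy ∂μ := by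
  change ∫ xy, g xy ∂μ.withDensity (fun xy => ((accProb lam xy / aBar μ lam).toNNReal : ℝ≥0∞)) = _
  rw [integral_withDensity_eq_integral_smul (by fun_prop), ← integral_smul]
  refine integral_congr_ae (ae_of_all _ fun xy => ?_)
  dsimp only
  rw [NNReal.smul_def, Real.coe_toNNReal _ (div_nonneg (accProb_nonneg _ _) (aBar_nonneg μ lam)),
    smul_smul, div_eq_inv_mul]

variable (hy : ∀ᵐ xy ∂μ, xy.2 = 0 ∨ xy.2 = 1)
include hy

lemma tiltedLaw_le_smul (lam : Evec d) :
    tiltedLaw μ lam ≤ ENNReal.ofReal (aBar μ lam)⁻¹ • μ := by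
  rw [tiltedLaw, ← withDensity_const]
  refine withDensity_mono (hy.mono fun xy h => ENNReal.ofReal_le_ofReal ?_)
  rw [div_eq_mul_inv]
  exact mul_le_of_le_one_left (inv_nonneg.2 (aBar_nonneg μ lam)) (accProb_le_one lam h)

lemma Integrable.tiltedLaw {E : Type*} [NormedAddCommGroup E] {g : Evec d × ℝ → E}
    (hg : Integrable g μ) (lam : Evec d) : Integrable g (tiltedLaw μ lam) :=
  (hg.smul_measure ENNReal.ofReal_ne_top).mono_measure (tiltedLaw_le_smul hy lam)

lemma integrable_accProb [IsFiniteMeasure μ] (lam : Evec d) : Integrable (accProb lam) μ :=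
  (integrable_const 1).mono' (by fun_prop) <| hy.mono fun xy h => by
    rw [Real.norm_eq_abs, abs_of_nonneg (accProb_nonneg lam xy)]
    exact accProb_le_one lam h

lemma aBar_pos [IsProbabilityMeasure μ] (lam : Evec d) : 0 < aBar μ lam := by
  rw [aBar, integral_pos_iff_support_of_nonneg (accProb_nonneg lam) (integrable_accProb hy lam)]
  refine pos_iff_ne_zero.2 fun h₀ => ?_
  have : ∀ᵐ _ ∂μ, False := by
    filter_upwards [hy, measure_eq_zero_iff_ae_notMem.1 h₀] with xy h hn
    exact hn (accProb_pos lam h).ne'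
  exact IsProbabilityMeasure.ne_zero μ (ae_eq_bot.1 (eventually_false_iff_eq_bot.1 this))

lemma continuous_aBar [IsFiniteMeasure μ] : Continuous (aBar μ) :=
  continuous_of_dominated (fun lam => (integrable_accProb hy lam).aestronglyMeasurable)
    (fun lam => hy.mono fun xy h => by
      rw [Real.norm_eq_abs, abs_of_nonneg (accProb_nonneg lam xy)]
      exact accProb_le_one lam h)
    (integrable_const 1) (ae_of_all _ fun xy => by fun_prop)

lemma continuousAt_integral_tiltedLaw [IsProbabilityMeasure μ] {T : Type*} [TopologicalSpace T]
    [FirstCountableTopology T] {E : Type*} [NormedAddCommGroup E] [NormedSpace ℝ E]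
    {lam : T → Evec d} (hlam : Continuous lam) {g : T → Evec d × ℝ → E} {t₀ : T}
    {bound : Evec d × ℝ → ℝ} (hgm : ∀ t, AEStronglyMeasurable (g t) μ)
    (hgb : ∀ᶠ t in 𝓝 t₀, ∀ᵐ xy ∂μ, ‖g t xy‖ ≤ bound xy) (hb : Integrable bound μ)
    (hgc : ∀ xy, ContinuousAt (fun t => g t xy) t₀) :
    ContinuousAt (fun t => ∫ xy, g t xy ∂tiltedLaw μ (lam t)) t₀ := by
  simp_rw [integral_tiltedLaw]
  refine ((((continuous_aBar hy).comp hlam).continuousAt).inv₀ (aBar_pos hy _).ne').smul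
    (continuousAt_of_dominated (bound := bound) ?_ ?_ hb (ae_of_all _ fun xy => ?_))
  · exact .of_forall fun t => (Continuous.aestronglyMeasurable (by fun_prop)).smul (hgm t)
  · filter_upwards [hgb] with t ht
    filter_upwards [ht, hy] with xy hle h
    rw [norm_smul, Real.norm_eq_abs, abs_of_nonneg (accProb_nonneg _ _)]
    exact (mul_le_of_le_one_left (norm_nonneg _) (accProb_le_one _ h)).trans hle
  · exact ((Continuous.accProb hlam continuous_const).continuousAt).smul (hgc xy)

end Tilted

lemma integrable_norm_of_integrable_norm_sq {α E : Type*} [MeasurableSpace α] {μ : Measure α}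
    [IsFiniteMeasure μ] [NormedAddCommGroup E] {f : α → E} (hf : AEStronglyMeasurable f μ)
    (h : Integrable (fun a => ‖f a‖ ^ 2) μ) : Integrable (fun a => ‖f a‖) μ :=
  (((memLp_two_iff_integrable_sq_norm hf).2 h).integrable one_le_two).norm

def scoreMean (μ : Measure (Evec d × ℝ)) (θ lam : Evec d) : Evec d :=
  ∫ xy, scoreVec θ lam xy ∂tiltedLaw μ lam

lemma abs_scoreVec_sub_mul_le {θ lam : Evec d} {xy : Evec d × ℝ} (h : xy.2 = 0 ∨ xy.2 = 1)
    {m : Evec d} {M : ℝ} (hm : ‖m‖ ≤ M) (i j : Fin d) :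
    |(scoreVec θ lam xy i - m i) * (scoreVec θ lam xy j - m j)| ≤ 2 * ‖xy.1‖ ^ 2 + 2 * M ^ 2 := by
  have hk : ∀ k, |scoreVec θ lam xy k - m k| ≤ ‖xy.1‖ + M := fun k =>
    (abs_sub _ _).trans (add_le_add ((PiLp.norm_apply_le _ k).trans (norm_scoreVec_le θ lam h))
      ((PiLp.norm_apply_le m k).trans hm))
  rw [abs_mul]
  nlinarith [mul_le_mul (hk i) (hk j) (abs_nonneg _) ((abs_nonneg _).trans (hk i)),
    sq_nonneg (‖xy.1‖ - M)]

lemma Jmat_apply (μ : Measure (Evec d × ℝ)) (θ lam : Evec d) (i j : Fin d) :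
    Jmat μ θ lam i j = ∫ xy, (scoreVec θ lam xy i - scoreMean μ θ lam i) *
      (scoreVec θ lam xy j - scoreMean μ θ lam j) ∂tiltedLaw μ lam := rfl

section ScoreCovariance

variable {μ : Measure (Evec d × ℝ)} [IsProbabilityMeasure μ]
  (hy : ∀ᵐ xy ∂μ, xy.2 = 0 ∨ xy.2 = 1) (hX2 : Integrable (fun xy : Evec d × ℝ => ‖xy.1‖ ^ 2) μ)
include hy hX2

lemma continuous_scoreMean : Continuous fun tl : Evec d × Evec d => scoreMean μ tl.1 tl.2 :=
  continuous_iff_continuousAt.2 fun _ => continuousAt_integral_tiltedLaw hy continuous_snd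
    (fun _ => Continuous.aestronglyMeasurable (by fun_prop))
    (.of_forall fun tl => hy.mono fun _ h => norm_scoreVec_le tl.1 tl.2 h)
    (integrable_norm_of_integrable_norm_sq (by fun_prop) hX2) (fun _ => by fun_prop)

lemma integrable_scoreCovariance_integrand (θ lam : Evec d) (i j : Fin d) :
    Integrable (fun xy => (scoreVec θ lam xy i - scoreMean μ θ lam i) *
      (scoreVec θ lam xy j - scoreMean μ θ lam j)) (tiltedLaw μ lam) := by
  refine Integrable.tiltedLaw hy ?_ lam
  exact ((hX2.const_mul 2).add (integrable_const (2 * ‖scoreMean μ θ lam‖ ^ 2))).mono'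
    (Continuous.aestronglyMeasurable (by fun_prop))
    (hy.mono fun _ h => abs_scoreVec_sub_mul_le h le_rfl i j)

lemma continuous_Jmat : Continuous fun tl : Evec d × Evec d => Jmat μ tl.1 tl.2 := by
  refine continuous_matrix fun i j => continuous_iff_continuousAt.2 fun t₀ => ?_
  simp only [Jmat_apply]
  have hm := continuous_scoreMean hy hX2
  -- The centring `scoreMean` is locally bounded, which gives a local integrable bound.
  have hM : ∀ᶠ tl in 𝓝 t₀, ‖scoreMean μ tl.1 tl.2‖ ≤ ‖scoreMean μ t₀.1 t₀.2‖ + 1 :=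
    (hm.norm.continuousAt.eventually_lt continuousAt_const (lt_add_one _)).mono fun _ => le_of_lt
  refine continuousAt_integral_tiltedLaw hy continuous_snd
    (bound := fun xy => 2 * ‖xy.1‖ ^ 2 + 2 * (‖scoreMean μ t₀.1 t₀.2‖ + 1) ^ 2)
    (fun _ => Continuous.aestronglyMeasurable (by fun_prop)) ?_
    ((hX2.const_mul 2).add (integrable_const _)) (fun _ => by fun_prop)
  filter_upwards [hM] with tl htl
  exact hy.mono fun xy h => abs_scoreVec_sub_mul_le h htl i j

end ScoreCovariance

/-- If `E‖X‖² < ∞` and no nonzero `v` has `E|v'X| = 0`, then the matrix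
`H(θ, λ)` is finite (entrywise integrable), symmetric positive definite and jointly continuous
in `(θ, λ)`, and the score covariance `J(θ, λ) = Var_{P_λ}[(Y - σ((θ-λ)'X)) X]` is finite
(entrywise integrable) and jointly continuous in `(θ, λ)`. -/
theorem Hmat_Jmat_finite_posDef_continuous {d : ℕ}
    (ν : Measure (Evec d)) [IsProbabilityMeasure ν]
    (pf : Evec d → ℝ) (hpf_meas : Measurable pf) (hpf : ∀ x, pf x ∈ Set.Ioo (0 : ℝ) 1)
    (hX2 : Integrable (fun x : Evec d => ‖x‖ ^ 2) ν)
    (hnd : ∀ v : Evec d, v ≠ 0 → ∫ x, |⟪v, x⟫| ∂ν ≠ 0) :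
    (∀ θ lam : Evec d, ∀ i j : Fin d,
        Integrable (fun x : Evec d =>
          Real.exp ⟪θ - lam, x⟫ / (1 + Real.exp ⟪θ - lam, x⟫) ^ 2 *
            ((Real.exp ⟪lam, x⟫ + Real.exp (flogit pf x)) /
              ((1 + Real.exp ⟪lam, x⟫) * (1 + Real.exp (flogit pf x)))) * (x i * x j)) ν) ∧
    (∀ θ lam : Evec d, (Hmat ν pf θ lam).PosDef) ∧
    Continuous (fun tl : Evec d × Evec d => Hmat ν pf tl.1 tl.2) ∧
    (∀ θ lam : Evec d, ∀ i j : Fin d,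
        Integrable (fun xy : Evec d × ℝ =>
          (scoreVec θ lam xy i -
              (∫ xy', scoreVec θ lam xy' ∂(tiltedLaw (jointLaw ν pf) lam)) i) *
            (scoreVec θ lam xy j -
              (∫ xy', scoreVec θ lam xy' ∂(tiltedLaw (jointLaw ν pf) lam)) j))
          (tiltedLaw (jointLaw ν pf) lam)) ∧
    Continuous (fun tl : Evec d × Evec d => Jmat (jointLaw ν pf) tl.1 tl.2) := by
  have hp : ∀ x, pf x ∈ Set.Icc (0 : ℝ) 1 := fun x => Set.Ioo_subset_Icc_self (hpf x)
  have : IsProbabilityMeasure (jointLaw ν pf) := isProbabilityMeasure_jointLaw hpf_meas hp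
  have hy := ae_snd_eq_zero_or_one_jointLaw (ν := ν) hpf_meas
  have hμ2 := integrable_comp_fst_jointLaw hpf_meas hp hX2
  have hwm : ∀ θ lam, AEStronglyMeasurable (hWeight pf θ lam) ν := fun θ lam =>
    (measurable_hWeight hpf_meas θ lam).aestronglyMeasurable
  refine ⟨fun θ lam => integrable_mul_apply_mul_apply (hwm θ lam) (abs_hWeight_le θ lam) hX2,
    fun θ lam => ?_, ?_, integrable_scoreCovariance_integrand hy hμ2, continuous_Jmat hy hμ2⟩
  · rw [Hmat_eq_weightedGram]
    exact weightedGram_posDef (hwm θ lam) (abs_hWeight_le θ lam) (hWeight_pos θ lam) hX2 hnd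
  · simp only [Hmat_eq_weightedGram]
    exact continuous_weightedGram (fun tl => hwm tl.1 tl.2) (fun tl => abs_hWeight_le tl.1 tl.2)
      continuous_hWeight hX2
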